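/- arXiv:1705.05499 — 4 statements merged into one kernel-verified Lean document; each statement's English description precedes it below -/
import Mathlib

section
/- Let n ≥ 3, let φ : ℝ → ℝ be smooth and positive, and let c, k be real constants. Define f(ξ) = ∫ [c − (n−2) ∫ φ(s)φ''(s) ds] · (1/φ(ξ)²) dξ + k (i.e., f' = (c − (n−2) G)/φ² where G is an antiderivative of φφ''). Then f satisfies (n−2)φ'' + 2φ'f' + φf'' = 0. -/
/-- Corollary 1.1 (potential function): if `f' = (c − (n−2)G)/φ²` where `G' = φφ''`,
then `(n−2)φ'' + 2φ'f' + φf'' = 0`. -/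
theorem stmt_1 (n : ℕ) (hn : 3 ≤ n) (φ f G : ℝ → ℝ) (c k : ℝ)
    (hφ : ContDiff ℝ (⊤ : ℕ∞) φ) (hφpos : ∀ ξ, 0 < φ ξ)
    (hG : ∀ ξ, HasDerivAt G (φ ξ * deriv (deriv φ) ξ) ξ)
    (hf : Differentiable ℝ f)
    (hf' : ∀ ξ, deriv f ξ = (c - ((n : ℝ) - 2) * G ξ) / (φ ξ) ^ 2) :
    ∀ ξ, ((n : ℝ) - 2) * deriv (deriv φ) ξ + 2 * deriv φ ξ * deriv f ξ
        + φ ξ * deriv (deriv f) ξ = 0 := by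
  intro ξ
  have hφd : Differentiable ℝ φ := hφ.differentiable (by simp)
  have hφξ : HasDerivAt φ (deriv φ ξ) ξ := (hφd ξ).hasDerivAt
  have hnum : HasDerivAt (fun x => c - ((n:ℝ)-2) * G x)
      (-(((n:ℝ)-2) * (φ ξ * deriv (deriv φ) ξ))) ξ := by
    simpa using ((hG ξ).const_mul ((n:ℝ)-2)).const_sub c
  have hden : HasDerivAt (fun x => φ x ^ 2) (2 * φ ξ * deriv φ ξ) ξ := by
    simpa [mul_comm] using hφξ.fun_pow 2
  have hne : (φ ξ)^2 ≠ 0 := pow_ne_zero _ (hφpos ξ).ne'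
  have hdf : HasDerivAt (fun x => (c - ((n:ℝ)-2) * G x) / (φ x)^2)
      ((-(((n:ℝ)-2) * (φ ξ * deriv (deriv φ) ξ)) * (φ ξ)^2
        - (c - ((n:ℝ)-2) * G ξ) * (2 * φ ξ * deriv φ ξ)) / ((φ ξ)^2)^2) ξ :=
    hnum.div hden hne
  have heq : deriv f = fun x => (c - ((n:ℝ)-2) * G x) / (φ x)^2 := funext hf'
  have hdf2 : deriv (deriv f) ξ = (-(((n:ℝ)-2) * (φ ξ * deriv (deriv φ) ξ)) * (φ ξ)^2
        - (c - ((n:ℝ)-2) * G ξ) * (2 * φ ξ * deriv φ ξ)) / ((φ ξ)^2)^2 := by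
    rw [heq]; exact hdf.deriv
  rw [hdf2, hf']
  have h0 : φ ξ ≠ 0 := (hφpos ξ).ne'
  field_simp
  ring
end

section
/- Let n ≥ 3, m ≥ 1, let φ : ℝ → ℝ be smooth and positive, and set f = 1/φ. Define h(ξ) = c − k/φ(ξ) − (m+n−2) ∫ [∫ φφ'' ds] (1/φ²) dξ (so that h' = k/φ² − (m+n−2)(1/φ²)∫ φφ'' dξ). Then h satisfies the ODE f[(n−2)φ'' + 2φ'h' + φh''] − mφf'' − 2mφ'f' = 0. -/
/-- Corollary 1.2 (potential function `h`): with `f = 1/φ` and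
`h' = k/φ² − (m+n−2)(1/φ²)G`, where `G' = φφ''`, the function `h` satisfies
`f[(n−2)φ'' + 2φ'h' + φh''] − mφf'' − 2mφ'f' = 0`. -/
theorem stmt_4 (n m : ℕ) (hn : 3 ≤ n) (hm : 1 ≤ m) (φ : ℝ → ℝ)
    (hφ : ContDiff ℝ (⊤ : ℕ∞) φ) (hφpos : ∀ ξ, 0 < φ ξ)
    (f : ℝ → ℝ) (hf : f = fun ξ => 1 / φ ξ)
    (G : ℝ → ℝ) (hG : ∀ ξ, HasDerivAt G (φ ξ * deriv (deriv φ) ξ) ξ)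
    (h : ℝ → ℝ) (k : ℝ) (hh : Differentiable ℝ h)
    (hh' : ∀ ξ, deriv h ξ = k / (φ ξ) ^ 2 - ((m : ℝ) + n - 2) * (1 / (φ ξ) ^ 2) * G ξ) :
    ∀ ξ, f ξ * (((n : ℝ) - 2) * deriv (deriv φ) ξ + 2 * deriv φ ξ * deriv h ξ
          + φ ξ * deriv (deriv h) ξ)
        - (m : ℝ) * φ ξ * deriv (deriv f) ξ - 2 * (m : ℝ) * deriv φ ξ * deriv f ξ = 0 := by
  have hφi : ContDiff ℝ (⊤ : ℕ∞) φ := hφ.of_le (by simp)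
  have hφ' : ContDiff ℝ (⊤ : ℕ∞) (deriv φ) := (contDiff_infty_iff_deriv.mp hφi).2
  have hne : ∀ x, φ x ≠ 0 := fun x => (hφpos x).ne'
  have hφd : ∀ x, HasDerivAt φ (deriv φ x) x := fun x =>
    (hφi.differentiable (by simp) x).hasDerivAt
  have hφd' : ∀ x, HasDerivAt (deriv φ) (deriv (deriv φ) x) x := fun x =>
    (hφ'.differentiable (by simp) x).hasDerivAt
  have hsq : ∀ x, HasDerivAt (fun y => (φ y) ^ 2) (2 * φ x * deriv φ x) x := by
    intro x
    have : HasDerivAt (fun y => (φ y) ^ 2) _ x := (hφd x).pow 2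
    convert this using 1
    push_cast
    ring
  -- first derivative of f
  have hfd : ∀ x, HasDerivAt f (-(deriv φ x) / (φ x) ^ 2) x := by
    intro x
    rw [hf]
    have : HasDerivAt (fun ξ => 1 / φ ξ) _ x := (hasDerivAt_const x (1 : ℝ)).div (hφd x) (hne x)
    convert this using 1
    field_simp
    ring
  have hdf : deriv f = fun x => -(deriv φ x) / (φ x) ^ 2 := funext fun x => (hfd x).deriv
  intro ξ
  -- second derivative of f
  have hf2 : HasDerivAt (deriv f)
      ((-(deriv (deriv φ) ξ) * (φ ξ) ^ 2 - -(deriv φ ξ) * (2 * φ ξ * deriv φ ξ)) / ((φ ξ) ^ 2) ^ 2) ξ := by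
    rw [hdf]
    exact ((hφd' ξ).neg).div (hsq ξ) (pow_ne_zero 2 (hne ξ))
  -- second derivative of h
  have hdh : deriv h = fun x => k / (φ x) ^ 2 - ((m : ℝ) + n - 2) * (1 / (φ x) ^ 2) * G x :=
    funext hh'
  set A : ℝ := (m : ℝ) + n - 2 with hA
  have h1 : HasDerivAt (fun x => k / (φ x) ^ 2)
      ((0 * (φ ξ) ^ 2 - k * (2 * φ ξ * deriv φ ξ)) / ((φ ξ) ^ 2) ^ 2) ξ :=
    (hasDerivAt_const ξ k).div (hsq ξ) (pow_ne_zero 2 (hne ξ))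
  have h2 : HasDerivAt (fun x => (1 : ℝ) / (φ x) ^ 2)
      ((0 * (φ ξ) ^ 2 - 1 * (2 * φ ξ * deriv φ ξ)) / ((φ ξ) ^ 2) ^ 2) ξ :=
    (hasDerivAt_const ξ (1 : ℝ)).div (hsq ξ) (pow_ne_zero 2 (hne ξ))
  have h3 : HasDerivAt (fun x => A * (1 / (φ x) ^ 2) * G x)
      ((A * ((0 * (φ ξ) ^ 2 - 1 * (2 * φ ξ * deriv φ ξ)) / ((φ ξ) ^ 2) ^ 2)) * G ξ
        + (A * (1 / (φ ξ) ^ 2)) * (φ ξ * deriv (deriv φ) ξ)) ξ :=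
    ((h2.const_mul A).mul (hG ξ))
  have hh2 : HasDerivAt (deriv h)
      ((0 * (φ ξ) ^ 2 - k * (2 * φ ξ * deriv φ ξ)) / ((φ ξ) ^ 2) ^ 2
        - ((A * ((0 * (φ ξ) ^ 2 - 1 * (2 * φ ξ * deriv φ ξ)) / ((φ ξ) ^ 2) ^ 2)) * G ξ
        + (A * (1 / (φ ξ) ^ 2)) * (φ ξ * deriv (deriv φ) ξ))) ξ := by
    rw [hdh]
    exact h1.sub h3
  rw [hh' ξ, hh2.deriv, hf2.deriv, hdf, hf]
  have hφξ := hne ξ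
  field_simp
  ring
end

section
/- Let n ≥ 3, let φ : ℝ → ℝ be smooth and positive, let c, k ∈ ℝ, and let G be an antiderivative of φφ''. Define f' = (c − (n−2)G)/φ² and ρ(ξ) = (ε_{i₀}/εᵢ)[φφ'' − (n−1)(φ')²] − ε_{i₀}(φ'/φ)(c − (n−2)G), where ε_{i₀}, εᵢ ∈ {±1} with εᵢ = 1. Then (f, φ, ρ) satisfies the system (n−2)φ'' + 2φ'f' + φf'' = 0 and ε_{i₀}[φφ'' − (n−1)(φ')² − φφ'f'] = ρ. -/
/-- Corollary 1.1: with `f' = (c − (n−2)G)/φ²` (`G' = φφ''`) and, taking `εᵢ = 1`,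
`ρ = ε₀[φφ'' − (n−1)(φ')²] − ε₀(φ'/φ)(c − (n−2)G)`, the pair `(f, φ, ρ)` satisfies
the reduced system (6). -/
theorem stmt_6 (n : ℕ) (hn : 3 ≤ n) (φ f G : ℝ → ℝ) (c k ε₀ : ℝ)
    (hε₀ : ε₀ = 1 ∨ ε₀ = -1)
    (hφ : ContDiff ℝ (⊤ : ℕ∞) φ) (hφpos : ∀ ξ, 0 < φ ξ)
    (hG : ∀ ξ, HasDerivAt G (φ ξ * deriv (deriv φ) ξ) ξ)
    (hf : Differentiable ℝ f)
    (hf' : ∀ ξ, deriv f ξ = (c - ((n : ℝ) - 2) * G ξ) / (φ ξ) ^ 2)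
    (ρ : ℝ → ℝ)
    (hρ : ρ = fun ξ => ε₀ * (φ ξ * deriv (deriv φ) ξ - ((n : ℝ) - 1) * (deriv φ ξ) ^ 2)
        - ε₀ * (deriv φ ξ / φ ξ) * (c - ((n : ℝ) - 2) * G ξ)) :
    (∀ ξ, ((n : ℝ) - 2) * deriv (deriv φ) ξ + 2 * deriv φ ξ * deriv f ξ
        + φ ξ * deriv (deriv f) ξ = 0) ∧
    (∀ ξ, ε₀ * (φ ξ * deriv (deriv φ) ξ - ((n : ℝ) - 1) * (deriv φ ξ) ^ 2
        - φ ξ * deriv φ ξ * deriv f ξ) = ρ ξ) := by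
  have hφd : Differentiable ℝ φ := hφ.differentiable (by simp)
  have hφne : ∀ ξ, φ ξ ≠ 0 := fun ξ => (hφpos ξ).ne'
  constructor
  · intro ξ
    have hderivf : deriv f = fun ξ => (c - ((n : ℝ) - 2) * G ξ) / (φ ξ) ^ 2 :=
      funext hf'
    -- derivative of numerator
    have hnum : HasDerivAt (fun ξ => c - ((n : ℝ) - 2) * G ξ)
        (-(((n : ℝ) - 2) * (φ ξ * deriv (deriv φ) ξ))) ξ :=
      ((hG ξ).const_mul ((n : ℝ) - 2)).const_sub c
    have hφξ : HasDerivAt φ (deriv φ ξ) ξ := (hφd ξ).hasDerivAt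
    have hden : HasDerivAt (fun ξ => (φ ξ) ^ 2) (2 * φ ξ * deriv φ ξ) ξ := by
      have := hφξ.pow 2
      show HasDerivAt (φ ^ 2) _ ξ
      simpa [mul_comm, mul_assoc] using this
    have hquot : HasDerivAt (fun ξ => (c - ((n : ℝ) - 2) * G ξ) / (φ ξ) ^ 2)
        ((-(((n : ℝ) - 2) * (φ ξ * deriv (deriv φ) ξ)) * (φ ξ) ^ 2
          - (c - ((n : ℝ) - 2) * G ξ) * (2 * φ ξ * deriv φ ξ)) / ((φ ξ) ^ 2) ^ 2) ξ :=
      hnum.div hden (pow_ne_zero 2 (hφne ξ))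
    have h2 : deriv (deriv f) ξ
        = (-(((n : ℝ) - 2) * (φ ξ * deriv (deriv φ) ξ)) * (φ ξ) ^ 2
          - (c - ((n : ℝ) - 2) * G ξ) * (2 * φ ξ * deriv φ ξ)) / ((φ ξ) ^ 2) ^ 2 := by
      rw [hderivf]; exact hquot.deriv
    rw [h2, hf' ξ]
    have := hφne ξ
    field_simp
    ring
  · intro ξ
    rw [hρ, hf' ξ]
    have := hφne ξ
    field_simp
end

section
/- Let n ≥ 3, ε₁,...,εₙ ∈ {±1}, α ∈ ℝⁿ with ε_{i₀} := Σ εₖαₖ² ≠ 0, and suppose φ, f : ℝ → ℝ are smooth, φ > 0, satisfying (n−2)φ'' + 2φ'f' + φf'' = 0. Define for x ∈ ℝⁿ, ξ = Σ αᵢxᵢ, Φ = φ∘ξ, F = f∘ξ. Then for each i, the quantity (n−2)Φ·Φ_{,x_ix_i} + εᵢ[Φ·Δ_gΦ − (n−1)|∇_gΦ|²] + 2Φ·Φ_{,x_i}F_{,x_i} + Φ²F_{,x_ix_i} − Φεᵢ Σₖ εₖF_{,x_k}Φ_{,x_k} equals εᵢ·ρ(ξ) where ρ = ε_{i₀}[φφ''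 − (n−1)(φ')² − φφ'f'], where Δ_gΦ = Σₖ εₖΦ_{,x_kx_k} and |∇_gΦ|² = Σₖ εₖ(Φ_{,x_k})². -/
/-- Partial derivative in the `i`-th coordinate direction. -/
noncomputable def pd {n : ℕ} (i : Fin n) (Φ : (Fin n → ℝ) → ℝ) (x : Fin n → ℝ) : ℝ :=
  deriv (fun t => Φ (Function.update x i t)) (x i)

lemma pd_cmul {n : ℕ} (c : ℝ) (h : (Fin n → ℝ) → ℝ) (i : Fin n) (x : Fin n → ℝ) :
    pd i (fun y => c * h y) x = c * pd i h x := by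
  unfold pd
  simp [deriv_const_mul_field]

lemma pd_comp {n : ℕ} (α : Fin n → ℝ) (g : ℝ → ℝ) (hg : Differentiable ℝ g)
    (i : Fin n) (x : Fin n → ℝ) :
    pd i (fun y => g (∑ j, α j * y j)) x = α i * deriv g (∑ j, α j * x j) := by
  have key : ∀ t : ℝ, ∑ j, α j * Function.update x i t j
      = (∑ j, α j * x j) + α i * (t - x i) := by
    intro t
    have h1 : ∑ j, (α j * Function.update x i t j - α j * x j) = α i * (t - x i) := by
      rw [Finset.sum_eq_single i]
      · simp [mul_sub]
      · intro j _ hj; rw [Function.update_of_ne hj]; ring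
      · simp
    rw [Finset.sum_sub_distrib] at h1
    linarith
  unfold pd
  have hfun : (fun t => g (∑ j, α j * Function.update x i t j))
      = fun t => g ((∑ j, α j * x j) + α i * (t - x i)) := by
    funext t; rw [key t]
  rw [hfun]
  have hinner : HasDerivAt (fun t : ℝ => (∑ j, α j * x j) + α i * (t - x i)) (α i) (x i) := by
    have : HasDerivAt (fun t : ℝ => t - x i) 1 (x i) := (hasDerivAt_id _).sub_const _
    simpa using (this.const_mul (α i)).const_add (∑ j, α j * x j)
  have hgs : HasDerivAt g (deriv g ((∑ j, α j * x j) + α i * (x i - x i)))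
      ((∑ j, α j * x j) + α i * (x i - x i)) := (hg _).hasDerivAt
  have := (hgs.comp (x i) hinner).deriv
  simp only [sub_self, mul_zero, add_zero] at this ⊢
  rw [show (fun t => g ((∑ j, α j * x j) + α i * (t - x i)))
      = g ∘ (fun t => (∑ j, α j * x j) + α i * (t - x i)) from rfl, this]
  ring

/-- Theorem 1.2 (diagonal computation): under the ODE constraint, all diagonal soliton
equations are satisfied with `ρ = ε₀[φφ'' − (n−1)(φ')² − φφ'f']`. -/
theorem stmt_10 (n : ℕ) (hn : 3 ≤ n) (ε : Fin n → ℝ) (hε : ∀ k, ε k = 1 ∨ ε k = -1)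
    (α : Fin n → ℝ) (ε₀ : ℝ) (hε₀ : ε₀ = ∑ k, ε k * (α k) ^ 2) (hε₀ne : ε₀ ≠ 0)
    (φ f : ℝ → ℝ) (hφ : ContDiff ℝ (⊤ : ℕ∞) φ) (hf : ContDiff ℝ (⊤ : ℕ∞) f) (hφpos : ∀ s, 0 < φ s)
    (hode : ∀ s, ((n : ℝ) - 2) * deriv (deriv φ) s + 2 * deriv φ s * deriv f s
        + φ s * deriv (deriv f) s = 0)
    (ξ : (Fin n → ℝ) → ℝ) (hξ : ξ = fun x => ∑ i, α i * x i)
    (Φ F : (Fin n → ℝ) → ℝ) (hΦ : Φ = fun x => φ (ξ x)) (hF : F = fun x => f (ξ x))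
    (ρ : ℝ → ℝ)
    (hρ : ρ = fun s => ε₀ * (φ s * deriv (deriv φ) s - ((n : ℝ) - 1) * (deriv φ s) ^ 2
        - φ s * deriv φ s * deriv f s)) :
    ∀ x : Fin n → ℝ, ∀ i : Fin n,
      ((n : ℝ) - 2) * Φ x * pd i (pd i Φ) x
        + ε i * (Φ x * (∑ k, ε k * pd k (pd k Φ) x)
            - ((n : ℝ) - 1) * (∑ k, ε k * (pd k Φ x) ^ 2))
        + 2 * Φ x * pd i Φ x * pd i F x + (Φ x) ^ 2 * pd i (pd i F) x
        - Φ x * ε i * (∑ k, ε k * pd k F x * pd k Φ x)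
      = ε i * ρ (ξ x) := by
  intro x i
  have hφd : Differentiable ℝ φ := hφ.differentiable (by simp)
  have hfd : Differentiable ℝ f := hf.differentiable (by simp)
  have hφ1d : Differentiable ℝ (deriv φ) := by
    have h2 : ContDiff ℝ ((⊤:ℕ∞) : WithTop ℕ∞) φ := hφ.of_le (by simp)
    exact (contDiff_infty_iff_deriv.mp h2).2.differentiable (by simp)
  have hf1d : Differentiable ℝ (deriv f) := by
    have h2 : ContDiff ℝ ((⊤:ℕ∞) : WithTop ℕ∞) f := hf.of_le (by simp)
    exact (contDiff_infty_iff_deriv.mp h2).2.differentiable (by simp)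
  subst hΦ hF hξ hρ
  have pdΦ : ∀ (k : Fin n) (y : Fin n → ℝ),
      pd k (fun y => φ (∑ j, α j * y j)) y = α k * deriv φ (∑ j, α j * y j) := by
    intro k y; exact pd_comp α φ hφd k y
  have pdF : ∀ (k : Fin n) (y : Fin n → ℝ),
      pd k (fun y => f (∑ j, α j * y j)) y = α k * deriv f (∑ j, α j * y j) := by
    intro k y; exact pd_comp α f hfd k y
  have pdΦ2 : ∀ (k : Fin n) (y : Fin n → ℝ),
      pd k (pd k (fun y => φ (∑ j, α j * y j))) y
        = α k ^ 2 * deriv (deriv φ) (∑ j, α j * y j) := by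
    intro k y
    have h1 : pd k (fun y => φ (∑ j, α j * y j))
        = fun y => α k * deriv φ (∑ j, α j * y j) := funext (pdΦ k)
    rw [h1, pd_cmul, pd_comp α (deriv φ) hφ1d]; ring
  have pdF2 : ∀ (k : Fin n) (y : Fin n → ℝ),
      pd k (pd k (fun y => f (∑ j, α j * y j))) y
        = α k ^ 2 * deriv (deriv f) (∑ j, α j * y j) := by
    intro k y
    have h1 : pd k (fun y => f (∑ j, α j * y j))
        = fun y => α k * deriv f (∑ j, α j * y j) := funext (pdF k)
    rw [h1, pd_cmul, pd_comp α (deriv f) hf1d]; ring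
  set s := ∑ j, α j * x j with hs
  have S1 : ∑ k, ε k * pd k (pd k (fun y => φ (∑ j, α j * y j))) x
      = ε₀ * deriv (deriv φ) s := by
    rw [hε₀, Finset.sum_mul]
    exact Finset.sum_congr rfl fun k _ => by rw [pdΦ2]; ring
  have S2 : ∑ k, ε k * (pd k (fun y => φ (∑ j, α j * y j)) x) ^ 2
      = ε₀ * (deriv φ s) ^ 2 := by
    rw [hε₀, Finset.sum_mul]
    exact Finset.sum_congr rfl fun k _ => by rw [pdΦ]; ring
  have S3 : ∑ k, ε k * pd k (fun y => f (∑ j, α j * y j)) x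
        * pd k (fun y => φ (∑ j, α j * y j)) x
      = ε₀ * (deriv f s * deriv φ s) := by
    rw [hε₀, Finset.sum_mul]
    exact Finset.sum_congr rfl fun k _ => by rw [pdΦ, pdF]; ring
  simp only [pdΦ2 i x, pdF2 i x, pdΦ i x, pdF i x, S1, S2, S3]
  have := hode s
  linear_combination (α i) ^ 2 * φ s * this
end
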